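/- Let W be a standard one-dimensional Brownian motion started at x ∈ ℝ, and let γ > 0. Then for every T > 0, E_x[exp(-(γ²/2)∫₀ᵀ W_s² ds)] = (cosh(Tγ))^{-1/2} · exp(-x²γ sinh(Tγ)/(2cosh(Tγ))). -/

import Mathlib

open Real MeasureTheory ProbabilityTheory

/-- A standard one-dimensional Brownian motion started at `0`: continuous paths,
`W 0 = 0` a.s., Gaussian increments `W t - W s ∼ N(0, t-s)`, and independent increments. -/
def IsBrownianMotion {Ω : Type*} [MeasureSpace Ω] (W : ℝ → Ω → ℝ) : Prop :=
  IsProbabilityMeasure (ℙ : Measure Ω) ∧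
  (∀ t, Measurable (W t)) ∧
  (∀ᵐ ω : Ω, W 0 ω = 0) ∧
  (∀ᵐ ω : Ω, Continuous fun t => W t ω) ∧
  (∀ s t : ℝ, 0 ≤ s → s ≤ t →
    Measure.map (fun ω => W t ω - W s ω) ℙ = gaussianReal 0 (Real.toNNReal (t - s))) ∧
  (∀ (n : ℕ) (t : Fin (n+1) → ℝ), Monotone t → 0 ≤ t 0 →
    iIndepFun
      (fun i : Fin n => fun ω => W (t i.succ) ω - W (t i.castSucc) ω) ℙ)



open scoped ENNReal NNReal

section CameronMartinAux

open Filter Topology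

lemma rpow_neg_half (x : ℝ) (h : 0 ≤ x) : x ^ (-(1:ℝ)/2) = (Real.sqrt x)⁻¹ := by
  rw [neg_div, Real.rpow_neg h, Real.sqrt_eq_rpow]

/-- Gaussian integral with a general quadratic exponent. -/
lemma integral_exp_neg_quadratic {p : ℝ} (hp : 0 < p) (q r : ℝ) :
    ∫ z : ℝ, Real.exp (-(p * z^2 + q * z + r))
      = Real.sqrt (π / p) * Real.exp (q^2/(4*p) - r) := by
  have key : ∀ z : ℝ, -(p * z^2 + q * z + r)
      = -p * (z + q/(2*p))^2 + (q^2/(4*p) - r) := by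
    intro z; field_simp; ring
  simp_rw [key, Real.exp_add, integral_mul_const]
  rw [show (fun z : ℝ => Real.exp (-p * (z + q/(2*p))^2)) = fun z : ℝ =>
      (fun y : ℝ => Real.exp (-p * y^2)) (z + q/(2*p)) from rfl]
  rw [MeasureTheory.integral_add_right_eq_self (fun y : ℝ => Real.exp (-p * y^2)) (q/(2*p)),
    integral_gaussian]

/-- The one-step Gaussian computation. -/
lemma gaussian_step {v : ℝ} (hv : 0 < v) {a : ℝ} (ha : 0 ≤ a) (y : ℝ) :
    ∫ z, Real.exp (-(a * (y + z)^2)) ∂(gaussianReal 0 v.toNNReal)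
      = (Real.sqrt (1 + 2*a*v))⁻¹ * Real.exp (-(a/(1+2*a*v)) * y^2) := by
  have hv0 : (v.toNNReal : ℝ) = v := Real.coe_toNNReal v hv.le
  have hvne : v.toNNReal ≠ 0 := by
    simp only [ne_eq, Real.toNNReal_eq_zero, not_le]; exact hv
  rw [gaussianReal_of_var_ne_zero _ hvne, gaussianPDF_def]
  rw [show (fun x => ENNReal.ofReal (gaussianPDFReal 0 v.toNNReal x))
      = fun x => ((Real.toNNReal (gaussianPDFReal 0 v.toNNReal x) : ℝ≥0) : ℝ≥0∞) from rfl]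
  rw [integral_withDensity_eq_integral_smul
    ((measurable_gaussianPDFReal 0 v.toNNReal).real_toNNReal) _]
  have h2v : (0:ℝ) < 2*v := by linarith
  have hp : 0 < a + 1/(2*v) := by positivity
  have hd : 0 < 1 + 2*a*v := by positivity
  have h1 : ∀ z : ℝ, (Real.toNNReal (gaussianPDFReal 0 v.toNNReal z))
        • Real.exp (-(a * (y + z)^2))
      = (Real.sqrt (2*π*v))⁻¹ * Real.exp (-((a + 1/(2*v)) * z^2 + (2*a*y) * z + a*y^2)) := by
    intro z
    rw [NNReal.smul_def, Real.coe_toNNReal _ (gaussianPDFReal_nonneg _ _ _)]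
    rw [gaussianPDFReal_def]
    simp only [hv0, smul_eq_mul, sub_zero]
    rw [mul_assoc, ← Real.exp_add]
    congr 2
    field_simp
    ring
  simp_rw [h1]
  rw [integral_const_mul, integral_exp_neg_quadratic hp]
  have e1 : (Real.sqrt (2*π*v))⁻¹ * Real.sqrt (π / (a + 1/(2*v)))
      = (Real.sqrt (1 + 2*a*v))⁻¹ := by
    rw [← Real.sqrt_inv, ← Real.sqrt_mul (inv_nonneg.2 (by positivity)), ← Real.sqrt_inv]
    congr 1
    field_simp
    ring
  have e2 : (2*a*y)^2/(4*(a + 1/(2*v))) - a*y^2 = -(a/(1+2*a*v)) * y^2 := by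
    field_simp
    ring
  rw [← mul_assoc, e1, e2]

/-- Sum of squares of successive prefix sums. -/
def sqSum : (n : ℕ) → ℝ → (Fin n → ℝ) → ℝ
  | 0, _, _ => 0
  | n+1, y, z => (y + z 0)^2 + sqSum n (y + z 0) (fun i => z i.succ)

lemma sqSum_nonneg : ∀ (n : ℕ) (y : ℝ) (z : Fin n → ℝ), 0 ≤ sqSum n y z
  | 0, _, _ => le_refl 0
  | n+1, y, z => add_nonneg (sq_nonneg _) (sqSum_nonneg n _ _)

lemma sqSum_cons (n : ℕ) (y x : ℝ) (w : Fin n → ℝ) :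
    sqSum (n+1) y (Fin.cons x w) = (y + x)^2 + sqSum n (y + x) w := by
  simp only [sqSum, Fin.cons_zero, Fin.cons_succ]

lemma sqSum_continuous : ∀ n : ℕ, Continuous (fun p : ℝ × (Fin n → ℝ) => sqSum n p.1 p.2)
  | 0 => continuous_const
  | n+1 => by
    have ih := sqSum_continuous n
    have h0 : Continuous (fun p : ℝ × (Fin (n+1) → ℝ) => p.1 + p.2 0) := by fun_prop
    have h1 : Continuous (fun p : ℝ × (Fin (n+1) → ℝ) =>
        ((p.1 + p.2 0, fun i : Fin n => p.2 i.succ) : ℝ × (Fin n → ℝ))) := by fun_prop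
    exact ((h0.pow 2)).add (ih.comp h1)

/-- The pair `(p_n, q_n)` driving the Riccati recursion. -/
def pq (c v : ℝ) : ℕ → ℝ × ℝ
  | 0 => (0, 1)
  | n+1 => ((pq c v n).1 + c * (pq c v n).2,
            2*v*(pq c v n).1 + (1+2*v*c) * (pq c v n).2)

lemma pq_pos {c v : ℝ} (hc : 0 ≤ c) (hv : 0 < v) :
    ∀ n, 0 ≤ (pq c v n).1 ∧ 1 ≤ (pq c v n).2
  | 0 => by simp [pq]
  | n+1 => by
    obtain ⟨h1, h2⟩ := pq_pos hc hv n
    have a1 : 0 ≤ 2*v*(pq c v n).1 := mul_nonneg (by linarith) h1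
    have a2 : (1:ℝ)*1 ≤ (1+2*v*c) * (pq c v n).2 :=
      mul_le_mul (by nlinarith) h2 zero_le_one (by nlinarith)
    constructor
    · simp only [pq]
      nlinarith
    · simp only [pq]
      nlinarith


/-- The finite-dimensional Gaussian computation, by induction. -/
lemma finite_dim {c v : ℝ} (hc : 0 ≤ c) (hv : 0 < v) :
    ∀ (n : ℕ) (y : ℝ),
    ∫ z : Fin n → ℝ, Real.exp (-(c * sqSum n y z))
        ∂(Measure.pi fun _ => gaussianReal 0 v.toNNReal)
      = (Real.sqrt (pq c v n).2)⁻¹ * Real.exp (-((pq c v n).1 / (pq c v n).2) * y^2)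
  | 0, y => by
    simp [sqSum, pq]
  | n+1, y => by
    obtain ⟨hP, hQ⟩ := pq_pos hc hv n
    have hQ0 : (0:ℝ) < (pq c v n).2 := lt_of_lt_of_le one_pos hQ
    set P := (pq c v n).1 with hPdef
    set Q := (pq c v n).2 with hQdef
    have ha : 0 ≤ c + P / Q := by positivity
    have hd : 0 < 1 + 2*(c + P/Q)*v := by positivity
    -- reduce the pi-integral to a product integral
    have hmp := (measurePreserving_piFinSuccAbove
      (fun _ : Fin (n+1) => gaussianReal 0 v.toNNReal) 0).symm
    rw [← hmp.integral_comp (MeasurableEquiv.piFinSuccAbove (fun _ => ℝ) 0).symm.measurableEmbedding]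
    have hcons : ∀ p : ℝ × (Fin n → ℝ),
        ((MeasurableEquiv.piFinSuccAbove (fun _ : Fin (n+1) => ℝ) 0).symm p)
          = Fin.cons p.1 p.2 := by
      intro p
      simp [MeasurableEquiv.piFinSuccAbove_symm_apply, Fin.insertNthEquiv, Fin.insertNth_zero]
    simp_rw [hcons, sqSum_cons]
    have hcont : Continuous (fun p : ℝ × (Fin n → ℝ) =>
        Real.exp (-(c * ((y + p.1)^2 + sqSum n (y + p.1) p.2)))) := by
      apply Real.continuous_exp.comp
      apply Continuous.neg
      apply Continuous.mul continuous_const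
      have h2 : Continuous (fun p : ℝ × (Fin n → ℝ) =>
          ((y + p.1, p.2) : ℝ × (Fin n → ℝ))) := by fun_prop
      exact (((continuous_const.add continuous_fst).pow 2)).add
        ((sqSum_continuous n).comp h2)
    have hint : Integrable (fun p : ℝ × (Fin n → ℝ) =>
        Real.exp (-(c * ((y + p.1)^2 + sqSum n (y + p.1) p.2))))
        ((gaussianReal 0 v.toNNReal).prod (Measure.pi fun _ : Fin n => gaussianReal 0 v.toNNReal)) := by
      apply Integrable.mono' (integrable_const (1:ℝ)) hcont.aestronglyMeasurable
      filter_upwards with p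
      rw [Real.norm_eq_abs, abs_of_pos (Real.exp_pos _), ← Real.exp_zero]
      apply Real.exp_le_exp.2
      have := sqSum_nonneg n (y + p.1) p.2
      nlinarith [sq_nonneg (y + p.1)]
    rw [integral_prod _ hint]
    have hinner : ∀ x : ℝ,
        (∫ w : Fin n → ℝ, Real.exp (-(c * ((y + x)^2 + sqSum n (y + x) w)))
          ∂(Measure.pi fun _ : Fin n => gaussianReal 0 v.toNNReal))
        = (Real.sqrt Q)⁻¹ * Real.exp (-((c + P/Q) * (y + x)^2)) := by
      intro x
      have : ∀ w : Fin n → ℝ, Real.exp (-(c * ((y + x)^2 + sqSum n (y + x) w)))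
          = Real.exp (-(c * (y+x)^2)) * Real.exp (-(c * sqSum n (y + x) w)) := by
        intro w; rw [← Real.exp_add]; ring_nf
      simp_rw [this]
      rw [integral_const_mul, finite_dim hc hv n (y + x)]
      rw [← mul_assoc, mul_comm (Real.exp _), mul_assoc, ← Real.exp_add]
      congr 2
      ring
    simp_rw [hinner]
    rw [integral_const_mul, gaussian_step hv ha y]
    rw [← mul_assoc]
    have key1 : (Real.sqrt Q)⁻¹ * (Real.sqrt (1 + 2*(c + P/Q)*v))⁻¹
        = (Real.sqrt (pq c v (n+1)).2)⁻¹ := by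
      rw [← mul_inv, ← Real.sqrt_mul hQ0.le]
      congr 2
      simp only [pq, ← hPdef, ← hQdef]
      field_simp
      ring
    have key2 : (c + P/Q)/(1 + 2*(c + P/Q)*v) = (pq c v (n+1)).1 / (pq c v (n+1)).2 := by
      simp only [pq, ← hPdef, ← hQdef]
      have hQ1 := (pq_pos hc hv (n+1)).2
      simp only [pq, ← hPdef, ← hQdef] at hQ1
      rw [div_eq_div_iff hd.ne' (by linarith)]
      field_simp
      ring
    rw [key1, key2]

lemma pq_closed_form {c v : ℝ} (hc : 0 < c) (hv : 0 < v) :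
    ∀ n : ℕ, (pq c v n).1 = c * Real.sinh (n * Real.arsinh (Real.sqrt (2*v*c + (v*c)^2)))
        / Real.sqrt (2*v*c + (v*c)^2) ∧
      (pq c v n).2 = Real.cosh (n * Real.arsinh (Real.sqrt (2*v*c + (v*c)^2)))
        + v*c*Real.sinh (n * Real.arsinh (Real.sqrt (2*v*c + (v*c)^2)))
          / Real.sqrt (2*v*c + (v*c)^2) := by
  set u := Real.sqrt (2*v*c + (v*c)^2) with hu
  have hu0 : 0 < u := Real.sqrt_pos.2 (by positivity)
  have hu2 : u^2 = 2*v*c + (v*c)^2 := Real.sq_sqrt (by positivity)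
  set θ := Real.arsinh u with hθ
  have hsinh : Real.sinh θ = u := Real.sinh_arsinh u
  have hcosh : Real.cosh θ = 1 + v*c := by
    rw [hθ, Real.cosh_arsinh, hu2]
    rw [show 1 + (2*v*c + (v*c)^2) = (1+v*c)^2 by ring]
    exact Real.sqrt_sq (by positivity)
  intro n
  induction n with
  | zero => simp [pq]
  | succ n ih =>
    obtain ⟨ih1, ih2⟩ := ih
    have hcast : ((n+1 : ℕ) : ℝ) * θ = n * θ + θ := by push_cast; ring
    constructor
    · show (pq c v n).1 + c * (pq c v n).2 = _
      rw [ih1, ih2, hcast, Real.sinh_add, hsinh, hcosh]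
      field_simp
      ring
    · show 2*v*(pq c v n).1 + (1+2*v*c) * (pq c v n).2 = _
      rw [ih1, ih2, hcast, Real.sinh_add, Real.cosh_add, hsinh, hcosh]
      field_simp
      linear_combination (-Real.sinh (n*θ)) * hu2


lemma nsq_tendsto : Tendsto (fun n : ℕ => ((n:ℝ))^2) atTop atTop :=
  (tendsto_pow_atTop (two_ne_zero)).comp tendsto_natCast_atTop_atTop

lemma tendsto_A (x γ T : ℝ) (hγ : 0 < γ) (hT : 0 < T) :
    Tendsto (fun n : ℕ =>
      (Real.sqrt (pq (γ^2/2*(T/n)) (T/n) n).2)⁻¹ *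
        Real.exp (-((pq (γ^2/2*(T/n)) (T/n) n).1 / (pq (γ^2/2*(T/n)) (T/n) n).2) * x^2))
      atTop
      (𝓝 ((Real.cosh (T*γ)) ^ (-(1:ℝ)/2)
        * Real.exp (- x^2 * γ * Real.sinh (T*γ) / (2 * Real.cosh (T*γ))))) := by
  have ha : 0 < T*γ := mul_pos hT hγ
  set a := T*γ with hadef
  -- the basic sequences
  set w : ℕ → ℝ := fun n => a^2/(n:ℝ)^2 + (a^2/(2*(n:ℝ)^2))^2 with hwdef
  set u : ℕ → ℝ := fun n => Real.sqrt (w n) with hudef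
  set θ : ℕ → ℝ := fun n => Real.arsinh (u n) with hθdef
  have hwpos : ∀ n : ℕ, 1 ≤ n → 0 < w n := by
    intro n hn
    have : (0:ℝ) < (n:ℝ) := by exact_mod_cast hn
    positivity
  have hupos : ∀ n : ℕ, 1 ≤ n → 0 < u n := fun n hn => Real.sqrt_pos.2 (hwpos n hn)
  -- limit of w and u
  have hw0 : Tendsto w atTop (𝓝 0) := by
    have h1 : Tendsto (fun n : ℕ => a^2/(n:ℝ)^2) atTop (𝓝 0) :=
      Tendsto.div_atTop tendsto_const_nhds nsq_tendsto
    have h2 : Tendsto (fun n : ℕ => (a^2/(2*(n:ℝ)^2))^2) atTop (𝓝 0) := by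
      have : Tendsto (fun n : ℕ => a^2/(2*(n:ℝ)^2)) atTop (𝓝 0) :=
        Tendsto.div_atTop tendsto_const_nhds (nsq_tendsto.const_mul_atTop two_pos)
      simpa using this.pow 2
    simpa using h1.add h2
  have hu0 : Tendsto u atTop (𝓝 0) := by
    have := (Real.continuous_sqrt.tendsto 0).comp hw0
    rw [Real.sqrt_zero] at this; exact this
  -- n * u n → a
  have hnu : Tendsto (fun n : ℕ => (n:ℝ) * u n) atTop (𝓝 a) := by
    have heq : ∀ᶠ n : ℕ in atTop, Real.sqrt (a^2 + a^4/(4*(n:ℝ)^2)) = (n:ℝ) * u n := by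
      filter_upwards [eventually_ge_atTop 1] with n hn
      have hn0 : (0:ℝ) < (n:ℝ) := by exact_mod_cast hn
      rw [hudef]
      rw [show (n:ℝ) * Real.sqrt (w n) = Real.sqrt ((n:ℝ)^2 * w n) by
        rw [Real.sqrt_mul (by positivity), Real.sqrt_sq hn0.le]]
      have hne : (n:ℝ) ≠ 0 := hn0.ne'
      congr 1
      simp only [hwdef]
      field_simp
      ring
    apply Tendsto.congr' heq
    have hlim : Tendsto (fun n : ℕ => a^2 + a^4/(4*(n:ℝ)^2)) atTop (𝓝 (a^2)) := by
      have : Tendsto (fun n : ℕ => a^4/(4*(n:ℝ)^2)) atTop (𝓝 0) :=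
        Tendsto.div_atTop tendsto_const_nhds (nsq_tendsto.const_mul_atTop four_pos)
      simpa using tendsto_const_nhds.add this
    have := (Real.continuous_sqrt.tendsto (a^2)).comp hlim
    rw [Real.sqrt_sq ha.le] at this; exact this
  -- arsinh u / u → 1
  have hratio : Tendsto (fun n : ℕ => Real.arsinh (u n) / u n) atTop (𝓝 1) := by
    have hder := Real.hasDerivAt_arsinh 0
    rw [hasDerivAt_iff_tendsto_slope] at hder
    have h0 : Tendsto u atTop (𝓝[≠] (0:ℝ)) := by
      apply tendsto_nhdsWithin_of_tendsto_nhds_of_eventually_within _ hu0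
      filter_upwards [eventually_ge_atTop 1] with n hn
      exact (hupos n hn).ne'
    have h2 : Tendsto (fun n : ℕ => Real.arsinh (u n) / u n) atTop
        (𝓝 ((Real.sqrt (1+0^2))⁻¹)) :=
      (hder.comp h0).congr (fun n => by
        simp [Function.comp, slope_def_field, Real.arsinh_zero])
    norm_num at h2
    exact h2
  -- n * θ n → a
  have hnθ : Tendsto (fun n : ℕ => (n:ℝ) * θ n) atTop (𝓝 a) := by
    have heq : ∀ᶠ n : ℕ in atTop,
        (Real.arsinh (u n) / u n) * ((n:ℝ) * u n) = (n:ℝ) * θ n := by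
      filter_upwards [eventually_ge_atTop 1] with n hn
      field_simp [(hupos n hn).ne']
      ring
    apply Tendsto.congr' heq
    simpa using hratio.mul hnu
  -- auxiliary coefficient limits
  have hvcu : Tendsto (fun n : ℕ => (a^2/(2*(n:ℝ)^2)) / u n) atTop (𝓝 0) := by
    have heq : ∀ᶠ n : ℕ in atTop,
        (a^2/2) * (((n:ℝ))⁻¹ * ((n:ℝ) * u n)⁻¹) = (a^2/(2*(n:ℝ)^2)) / u n := by
      filter_upwards [eventually_ge_atTop 1] with n hn
      have hn0 : (0:ℝ) < (n:ℝ) := by exact_mod_cast hn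
      field_simp [(hupos n hn).ne']
    apply Tendsto.congr' heq
    have h1 : Tendsto (fun n : ℕ => ((n:ℝ))⁻¹) atTop (𝓝 0) :=
      tendsto_inv_atTop_zero.comp tendsto_natCast_atTop_atTop
    have h2 : Tendsto (fun n : ℕ => ((n:ℝ) * u n)⁻¹) atTop (𝓝 a⁻¹) :=
      (tendsto_inv₀ ha.ne').comp hnu
    have := (tendsto_const_nhds (x := a^2/2)).mul (h1.mul h2)
    simpa using this
  have hcu : Tendsto (fun n : ℕ => (γ^2/2*(T/n)) / u n) atTop (𝓝 (γ/2)) := by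
    have heq : ∀ᶠ n : ℕ in atTop,
        (γ^2*T/2) * ((n:ℝ) * u n)⁻¹ = (γ^2/2*(T/n)) / u n := by
      filter_upwards [eventually_ge_atTop 1] with n hn
      have hn0 : (0:ℝ) < (n:ℝ) := by exact_mod_cast hn
      field_simp [(hupos n hn).ne']
    apply Tendsto.congr' heq
    have h2 : Tendsto (fun n : ℕ => ((n:ℝ) * u n)⁻¹) atTop (𝓝 a⁻¹) :=
      (tendsto_inv₀ ha.ne').comp hnu
    have := (tendsto_const_nhds (x := γ^2*T/2)).mul h2
    have hval : γ^2*T/2 * a⁻¹ = γ/2 := by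
      rw [hadef]; field_simp
    rw [hval] at this
    simpa using this
  -- limits of p and q
  have hsinh : Tendsto (fun n : ℕ => Real.sinh ((n:ℝ) * θ n)) atTop (𝓝 (Real.sinh a)) :=
    (Real.continuous_sinh.tendsto a).comp hnθ
  have hcosh : Tendsto (fun n : ℕ => Real.cosh ((n:ℝ) * θ n)) atTop (𝓝 (Real.cosh a)) :=
    (Real.continuous_cosh.tendsto a).comp hnθ
  -- identification of pq with the closed form along the sequence
  have hpq : ∀ᶠ n : ℕ in atTop,
      (pq (γ^2/2*(T/n)) (T/n) n).1 = ((γ^2/2*(T/n)) / u n) * Real.sinh ((n:ℝ) * θ n) ∧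
      (pq (γ^2/2*(T/n)) (T/n) n).2
        = Real.cosh ((n:ℝ) * θ n) + ((a^2/(2*(n:ℝ)^2)) / u n) * Real.sinh ((n:ℝ) * θ n) := by
    filter_upwards [eventually_ge_atTop 1] with n hn
    have hn0 : (0:ℝ) < (n:ℝ) := by exact_mod_cast hn
    have hc : 0 < γ^2/2*(T/n) := by positivity
    have hv : 0 < T/(n:ℝ) := by positivity
    have harg : 2*(T/(n:ℝ))*(γ^2/2*(T/n)) + ((T/(n:ℝ))*(γ^2/2*(T/n)))^2 = w n := by
      rw [hwdef, hadef]
      field_simp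
    have hvc : (T/(n:ℝ))*(γ^2/2*(T/n)) = a^2/(2*(n:ℝ)^2) := by
      rw [hadef]; field_simp
    obtain ⟨h1, h2⟩ := pq_closed_form hc hv n
    rw [harg] at h1 h2
    refine ⟨?_, ?_⟩
    · rw [h1]; rw [hudef, hθdef]; ring
    · rw [h2, hvc]; rw [hudef, hθdef]; ring
  -- assemble the limits
  have hQlim : Tendsto (fun n : ℕ => (pq (γ^2/2*(T/n)) (T/n) n).2) atTop (𝓝 (Real.cosh a)) := by
    apply Tendsto.congr' (by filter_upwards [hpq] with n h using (h.2).symm)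
    have := hcosh.add (hvcu.mul hsinh)
    simpa using this
  have hPlim : Tendsto (fun n : ℕ => (pq (γ^2/2*(T/n)) (T/n) n).1) atTop
      (𝓝 (γ/2 * Real.sinh a)) := by
    apply Tendsto.congr' (by filter_upwards [hpq] with n h using (h.1).symm)
    exact hcu.mul hsinh
  have hcoshpos : 0 < Real.cosh a := Real.cosh_pos a
  have hPQ : Tendsto (fun n : ℕ =>
      (pq (γ^2/2*(T/n)) (T/n) n).1 / (pq (γ^2/2*(T/n)) (T/n) n).2) atTop
      (𝓝 (γ/2 * Real.sinh a / Real.cosh a)) := hPlim.div hQlim hcoshpos.ne'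
  have hsqrtlim : Tendsto (fun n : ℕ => (Real.sqrt (pq (γ^2/2*(T/n)) (T/n) n).2)⁻¹) atTop
      (𝓝 ((Real.sqrt (Real.cosh a))⁻¹)) :=
    (tendsto_inv₀ (Real.sqrt_pos.2 hcoshpos).ne').comp
      ((Real.continuous_sqrt.tendsto _).comp hQlim)
  have hexplim : Tendsto (fun n : ℕ =>
      Real.exp (-((pq (γ^2/2*(T/n)) (T/n) n).1 / (pq (γ^2/2*(T/n)) (T/n) n).2) * x^2)) atTop
      (𝓝 (Real.exp (-(γ/2 * Real.sinh a / Real.cosh a) * x^2))) :=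
    (Real.continuous_exp.tendsto _).comp ((hPQ.neg).mul tendsto_const_nhds)
  have hfinal := hsqrtlim.mul hexplim
  have hval : (Real.cosh (T*γ)) ^ (-(1:ℝ)/2)
        * Real.exp (- x^2 * γ * Real.sinh (T*γ) / (2 * Real.cosh (T*γ)))
      = (Real.sqrt (Real.cosh a))⁻¹ * Real.exp (-(γ/2 * Real.sinh a / Real.cosh a) * x^2) := by
    rw [← hadef]
    congr 1
    · rw [neg_div, Real.rpow_neg hcoshpos.le, Real.sqrt_eq_rpow]
    · congr 1
      field_simp
  rw [hval]
  exact hfinal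

lemma riemann_sum_tendsto {f : ℝ → ℝ} (hf : Continuous f) {T : ℝ} (hT : 0 < T) :
    Tendsto (fun n : ℕ => (T/n) * ∑ k ∈ Finset.range n, f (((k:ℝ)+1)*(T/n))) atTop
      (𝓝 (∫ s in (0:ℝ)..T, f s)) := by
  rw [Metric.tendsto_atTop]
  intro ε hε
  have hε' : 0 < ε/(2*T) := by positivity
  obtain ⟨δ, hδ, hδprop⟩ := Metric.uniformContinuousOn_iff.1
    (isCompact_Icc.uniformContinuousOn_of_continuous (s := Set.Icc 0 T) hf.continuousOn)
    (ε/(2*T)) hε'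
  obtain ⟨N₀, hN₀⟩ := exists_nat_gt (T/δ)
  refine ⟨max N₀ 1, fun n hn => ?_⟩
  have hn1 : 1 ≤ n := le_trans (le_max_right _ _) hn
  have hnN₀ : (N₀ : ℝ) ≤ n := by exact_mod_cast le_trans (le_max_left _ _) hn
  have hn0 : (0:ℝ) < n := by exact_mod_cast hn1
  set d := T/(n:ℝ) with hd
  have hd0 : 0 < d := by positivity
  have hdδ : d < δ := by
    rw [hd, div_lt_iff₀ hn0]
    have : T/δ < (n:ℝ) := lt_of_lt_of_le hN₀ hnN₀
    rw [div_lt_iff₀ hδ] at this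
    linarith [this]
  -- decompose the integral
  have hadj : ∑ k ∈ Finset.range n, ∫ s in ((k:ℝ)*d)..(((k:ℝ)+1)*d), f s
      = ∫ s in (0:ℝ)..T, f s := by
    have := intervalIntegral.sum_integral_adjacent_intervals
      (a := fun k : ℕ => (k:ℝ)*d) (n := n) (μ := volume) (f := f)
      (fun k _ => hf.intervalIntegrable _ _)
    simp only [Nat.cast_zero, zero_mul] at this
    rw [show ∑ k ∈ Finset.range n, ∫ s in ((k:ℝ)*d)..(((k:ℝ)+1)*d), f s
        = ∑ k ∈ Finset.range n, ∫ s in ((k:ℝ)*d)..(((k+1:ℕ):ℝ)*d), f s by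
      apply Finset.sum_congr rfl; intro k _; push_cast; ring_nf]
    rw [this]
    congr 1
    rw [hd]
    field_simp
  -- rewrite the Riemann sum
  have hsum : (T/(n:ℝ)) * ∑ k ∈ Finset.range n, f (((k:ℝ)+1)*d)
      = ∑ k ∈ Finset.range n, ∫ _ in ((k:ℝ)*d)..(((k:ℝ)+1)*d), f (((k:ℝ)+1)*d) := by
    rw [Finset.mul_sum]
    apply Finset.sum_congr rfl
    intro k _
    rw [intervalIntegral.integral_const]
    rw [show ((k:ℝ)+1)*d - (k:ℝ)*d = d by ring]
    simp [hd, smul_eq_mul]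
  rw [Real.dist_eq, hsum, ← hadj, ← Finset.sum_sub_distrib]
  have hbound : ∀ k ∈ Finset.range n,
      |(∫ _ in ((k:ℝ)*d)..(((k:ℝ)+1)*d), f (((k:ℝ)+1)*d)) - ∫ s in ((k:ℝ)*d)..(((k:ℝ)+1)*d), f s|
        ≤ (ε/(2*T)) * d := by
    intro k hk
    have hk' : (k:ℝ) + 1 ≤ n := by
      have : k + 1 ≤ n := Finset.mem_range.1 hk
      exact_mod_cast this
    have hsub : ∀ s ∈ Set.uIoc ((k:ℝ)*d) (((k:ℝ)+1)*d),
        ‖f (((k:ℝ)+1)*d) - f s‖ ≤ ε/(2*T) := by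
      intro s hs
      rw [Set.uIoc_of_le (by nlinarith : (k:ℝ)*d ≤ ((k:ℝ)+1)*d)] at hs
      obtain ⟨hs1, hs2⟩ := hs
      have hk0 : (0:ℝ) ≤ (k:ℝ)*d := by positivity
      have hsT : s ≤ T := by
        calc s ≤ ((k:ℝ)+1)*d := hs2
        _ ≤ (n:ℝ)*d := by nlinarith
        _ = T := by rw [hd]; field_simp
      have hmem1 : (((k:ℝ)+1)*d) ∈ Set.Icc (0:ℝ) T := by
        constructor
        · positivity
        · calc ((k:ℝ)+1)*d ≤ (n:ℝ)*d := by nlinarith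
          _ = T := by rw [hd]; field_simp
      have hmem2 : s ∈ Set.Icc (0:ℝ) T := ⟨le_trans hk0 hs1.le, hsT⟩
      have hdist : dist (((k:ℝ)+1)*d) s < δ := by
        rw [Real.dist_eq, abs_of_nonneg (by linarith : (0:ℝ) ≤ ((k:ℝ)+1)*d - s)]
        have : ((k:ℝ)+1)*d - s < d := by nlinarith
        linarith
      have := hδprop _ hmem1 _ hmem2 hdist
      rw [Real.dist_eq] at this
      exact this.le
    have hle : (k:ℝ)*d ≤ ((k:ℝ)+1)*d := by nlinarith
    have hconst : (∫ _ in ((k:ℝ)*d)..(((k:ℝ)+1)*d), f (((k:ℝ)+1)*d))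
          - (∫ s in ((k:ℝ)*d)..(((k:ℝ)+1)*d), f s)
        = ∫ s in ((k:ℝ)*d)..(((k:ℝ)+1)*d), (f (((k:ℝ)+1)*d) - f s) := by
      rw [intervalIntegral.integral_sub (intervalIntegrable_const) (hf.intervalIntegrable _ _)]
    rw [hconst]
    have h2 := intervalIntegral.norm_integral_le_of_norm_le_const hsub
    have h3 : |((k:ℝ)+1)*d - (k:ℝ)*d| = d := by
      rw [show ((k:ℝ)+1)*d - (k:ℝ)*d = d by ring]
      exact abs_of_pos hd0
    rw [h3] at h2
    exact h2
  calc |∑ k ∈ Finset.range n,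
      ((∫ _ in ((k:ℝ)*d)..(((k:ℝ)+1)*d), f (((k:ℝ)+1)*d)) - ∫ s in ((k:ℝ)*d)..(((k:ℝ)+1)*d), f s)|
      ≤ ∑ k ∈ Finset.range n, |(∫ _ in ((k:ℝ)*d)..(((k:ℝ)+1)*d), f (((k:ℝ)+1)*d))
          - ∫ s in ((k:ℝ)*d)..(((k:ℝ)+1)*d), f s| := Finset.abs_sum_le_sum_abs _ _
    _ ≤ ∑ _k ∈ Finset.range n, (ε/(2*T)) * d := Finset.sum_le_sum hbound
    _ = (n:ℝ) * ((ε/(2*T)) * d) := by rw [Finset.sum_const, Finset.card_range]; simp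
    _ = ε/2 := by rw [hd]; field_simp
    _ < ε := by linarith

lemma increments_law {Ω : Type*} [MeasureSpace Ω] {W : ℝ → Ω → ℝ} (hW : IsBrownianMotion W)
    (n : ℕ) {d : ℝ} (hd : 0 < d) :
    Measure.map (fun ω => fun i : Fin n => W (((i:ℕ)+1)*d) ω - W (((i:ℕ):ℝ)*d) ω) ℙ
      = Measure.pi (fun _ : Fin n => gaussianReal 0 d.toNNReal) := by
  obtain ⟨hprob, hmeas, hzero, hcont, hgauss, hindep⟩ := hW
  have hξmeas : Measurable (fun ω => fun i : Fin n => W (((i:ℕ)+1)*d) ω - W (((i:ℕ):ℝ)*d) ω) :=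
    measurable_pi_lambda _ (fun i => (hmeas _).sub (hmeas _))
  symm
  apply Measure.pi_eq
  intro s hs
  rw [Measure.map_apply hξmeas (MeasurableSet.univ_pi hs)]
  have hpre : (fun ω => fun i : Fin n => W (((i:ℕ)+1)*d) ω - W (((i:ℕ):ℝ)*d) ω) ⁻¹'
      (Set.univ.pi s)
      = ⋂ i ∈ (Finset.univ : Finset (Fin n)), (fun ω => W (((i:ℕ)+1)*d) ω - W (((i:ℕ):ℝ)*d) ω) ⁻¹' (s i) := by
    ext ω
    simp [Set.mem_pi]
  rw [hpre]
  -- independence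
  have ht : Monotone (fun j : Fin (n+1) => ((j:ℕ):ℝ)*d) := by
    intro j k hjk
    have : ((j:ℕ):ℝ) ≤ ((k:ℕ):ℝ) := by exact_mod_cast hjk
    exact mul_le_mul_of_nonneg_right this hd.le
  have ht0 : (0:ℝ) ≤ ((0 : Fin (n+1)):ℕ) * d := by simp
  have hio := hindep n (fun j : Fin (n+1) => ((j:ℕ):ℝ)*d) ht ht0
  have hfun : (fun i : Fin n => fun ω =>
        W (((i.succ : Fin (n+1)):ℕ)*d) ω - W (((i.castSucc : Fin (n+1)):ℕ)*d) ω)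
      = fun i : Fin n => fun ω => W (((i:ℕ)+1)*d) ω - W (((i:ℕ):ℝ)*d) ω := by
    funext i ω
    simp [Fin.val_succ, Fin.coe_castSucc]
  rw [hfun] at hio
  rw [hio.measure_inter_preimage_eq_mul Finset.univ (fun i _ => hs i)]
  apply Finset.prod_congr rfl
  intro i _
  have h1 : ((i:ℕ):ℝ)*d ≤ (((i:ℕ):ℝ)+1)*d := by nlinarith
  have h2 : (0:ℝ) ≤ ((i:ℕ):ℝ)*d := by positivity
  have := hgauss (((i:ℕ):ℝ)*d) ((((i:ℕ):ℝ)+1)*d) h2 h1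
  rw [show (((i:ℕ):ℝ)+1)*d - ((i:ℕ):ℝ)*d = d by ring] at this
  rw [← this, Measure.map_apply (f := fun ω => W ((((i:ℕ):ℝ)+1)*d) ω - W (((i:ℕ):ℝ)*d) ω)
    ((hmeas _).sub (hmeas _)) (hs i)]


lemma sqSum_eq : ∀ (n : ℕ) (g : ℕ → ℝ) (y : ℝ),
    sqSum n y (fun i : Fin n => g ((i:ℕ)+1) - g (i:ℕ))
      = ∑ k ∈ Finset.range n, (y + (g (k+1) - g 0))^2
  | 0, g, y => by simp [sqSum]
  | n+1, g, y => by
    have ih := sqSum_eq n (fun m => g (m+1)) (y + (g 1 - g 0))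
    simp only [sqSum]
    rw [Finset.sum_range_succ']
    have htail : (fun i : Fin n => (fun j : Fin (n+1) => g ((j:ℕ)+1) - g (j:ℕ)) i.succ)
        = fun i : Fin n => (fun m => g (m+1)) ((i:ℕ)+1) - (fun m => g (m+1)) (i:ℕ) := by
      funext i
      simp [Fin.val_succ]
    show (y + (g 1 - g 0))^2 + sqSum n (y + (g 1 - g 0)) _ = _
    rw [htail, ih]
    have : ∀ k, (y + (g 1 - g 0)) + ((fun m => g (m+1)) (k+1) - (fun m => g (m+1)) 0)
        = y + (g (k+1+1) - g 0) := by intro k; simp; ring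
    simp only [this]
    ring

end CameronMartinAux

section
open Filter Topology

/-- Cameron–Martin formula: for a Brownian motion started at `x` (realized as `x + W` with
`W` standard) and `γ > 0`, `T > 0`,
`E_x[exp(-(γ²/2)∫₀ᵀ W_s² ds)] = cosh(Tγ)^{-1/2} exp(-x²γ sinh(Tγ)/(2cosh(Tγ)))`. -/
theorem stmt_7 {Ω : Type*} [MeasureSpace Ω] (W : ℝ → Ω → ℝ) (hW : IsBrownianMotion W)
    (x γ T : ℝ) (hγ : 0 < γ) (hT : 0 < T) :
    ∫ ω, Real.exp (-(γ^2/2) * ∫ s in (0:ℝ)..T, (x + W s ω)^2) ∂ℙ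
      = (Real.cosh (T*γ)) ^ (-(1:ℝ)/2)
        * Real.exp (- x^2 * γ * Real.sinh (T*γ) / (2 * Real.cosh (T*γ))) := by
  obtain ⟨hprob, hmeas, hzero, hcont, hgauss, hindep⟩ := id hW
  set F : ℕ → Ω → ℝ := fun n ω => Real.exp (-(γ^2/2) *
    ((T/n) * ∑ k ∈ Finset.range n, (x + W (((k:ℝ)+1)*(T/n)) ω)^2)) with hF
  -- Step 1: dominated convergence
  have hstep1 : Tendsto (fun n => ∫ ω, F n ω ∂ℙ) atTop
      (𝓝 (∫ ω, Real.exp (-(γ^2/2) * ∫ s in (0:ℝ)..T, (x + W s ω)^2) ∂ℙ)) := by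
    apply tendsto_integral_of_dominated_convergence (fun _ => (1:ℝ))
    · intro n
      apply Measurable.aestronglyMeasurable
      apply Real.measurable_exp.comp
      apply Measurable.const_mul
      apply Measurable.const_mul
      apply Finset.measurable_sum
      intro k _
      exact ((hmeas _).const_add x).pow_const 2
    · exact integrable_const 1
    · intro n
      filter_upwards with ω
      rw [Real.norm_eq_abs, abs_of_pos (Real.exp_pos _), Real.exp_le_one_iff]
      have h1 : 0 ≤ (T/(n:ℝ)) * ∑ k ∈ Finset.range n, (x + W (((k:ℝ)+1)*(T/n)) ω)^2 := by
        apply mul_nonneg (by positivity)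
        exact Finset.sum_nonneg (fun k _ => sq_nonneg _)
      nlinarith [sq_nonneg γ]
    · filter_upwards [hcont] with ω hcontω
      have hfc : Continuous (fun s : ℝ => (x + W s ω)^2) :=
        ((continuous_const.add hcontω).pow 2)
      have := riemann_sum_tendsto hfc hT
      have h2 := (Real.continuous_exp.tendsto _).comp (this.const_mul (-(γ^2/2)))
      exact h2
  -- Step 2: identify the integrals for n ≥ 1
  have hstep2 : ∀ᶠ n : ℕ in atTop,
      (Real.sqrt (pq (γ^2/2*(T/n)) (T/n) n).2)⁻¹ *
        Real.exp (-((pq (γ^2/2*(T/n)) (T/n) n).1 / (pq (γ^2/2*(T/n)) (T/n) n).2) * x^2)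
      = ∫ ω, F n ω ∂ℙ := by
    filter_upwards [eventually_ge_atTop 1] with n hn
    have hn0 : (0:ℝ) < (n:ℝ) := by exact_mod_cast hn
    set d := T/(n:ℝ) with hd
    have hd0 : 0 < d := by positivity
    have hc0 : 0 ≤ γ^2/2*d := by positivity
    -- the increment map
    set ξ : Ω → Fin n → ℝ := fun ω => fun i : Fin n =>
      W (((i:ℕ)+1)*d) ω - W (((i:ℕ):ℝ)*d) ω with hξ
    have hξmeas : Measurable ξ :=
      measurable_pi_lambda _ (fun i => (hmeas _).sub (hmeas _))
    have hg : Continuous (fun z : Fin n → ℝ => Real.exp (-((γ^2/2*d) * sqSum n x z))) := by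
      apply Real.continuous_exp.comp
      apply Continuous.neg
      apply Continuous.mul continuous_const
      exact (sqSum_continuous n).comp (Continuous.prodMk continuous_const continuous_id)
    -- a.e. identification of the integrand
    have hae : ∀ᵐ ω : Ω, F n ω = Real.exp (-((γ^2/2*d) * sqSum n x (ξ ω))) := by
      filter_upwards [hzero] with ω hω
      have hsq := sqSum_eq n (fun m => W ((m:ℝ)*d) ω) x
      have hξeq : (fun i : Fin n => (fun m : ℕ => W ((m:ℝ)*d) ω) ((i:ℕ)+1)
            - (fun m : ℕ => W ((m:ℝ)*d) ω) (i:ℕ)) = ξ ω := by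
        funext i
        simp only [hξ]
        push_cast
        ring_nf
      rw [hξeq] at hsq
      rw [hF]
      simp only
      rw [hsq]
      have hsumeq : ∑ k ∈ Finset.range n, (x + W (((k:ℝ)+1)*d) ω)^2
          = ∑ k ∈ Finset.range n,
            (x + ((fun m : ℕ => W ((m:ℝ)*d) ω) (k+1) - (fun m : ℕ => W ((m:ℝ)*d) ω) 0))^2 := by
        apply Finset.sum_congr rfl
        intro k _
        simp only
        rw [show ((0:ℕ):ℝ)*d = (0:ℝ) by simp, hω]
        push_cast
        ring_nf
      rw [hsumeq]
      congr 1
      ring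
    rw [integral_congr_ae hae]
    have hmap : ∫ ω, Real.exp (-((γ^2/2*d) * sqSum n x (ξ ω))) ∂ℙ
        = ∫ z : Fin n → ℝ, Real.exp (-((γ^2/2*d) * sqSum n x z)) ∂(Measure.map ξ ℙ) := by
      rw [integral_map hξmeas.aemeasurable hg.aestronglyMeasurable]
    rw [hmap, increments_law hW n hd0, finite_dim hc0 hd0 n x]
  exact tendsto_nhds_unique hstep1 ((tendsto_A x γ T hγ hT).congr' hstep2)

end
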